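/- arXiv:1806.10096 — 4 statements merged into one kernel-verified Lean document; each statement's English description precedes it below -/
import Mathlib

section
/- Let G = (V,E) be a connected, locally finite, infinite simple graph in which every vertex has degree at least 2, equipped with edge lengths ℓ : E → (0,∞) such that ℓ* := sup_{e∈E} ℓ(e) < ∞. Then α(G) = min{ 2/ℓ*, α_S(G) }, where α_S(G) := inf{ deg(∂G̃)/mes(G̃) : G̃ a finite star-like subgraph of G }. -/
open scoped BigOperators

noncomputable section

variable {V : Type*}

/-- Total length of a set of edges. -/
def mes (ℓ : Sym2 V → ℝ) (E : Set (Sym2 V)) : ℝ := ∑ᶠ e ∈ E, ℓ e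

/-- Weight `m(v)` of a vertex: total length of the edges incident to `v`. -/
def mval (G : SimpleGraph V) (ℓ : Sym2 V → ℝ) (v : V) : ℝ := ∑ᶠ e ∈ G.incidenceSet v, ℓ e

/-- Characteristic value of an edge (tree case: no tile terms). -/
def cVal (G : SimpleGraph V) (ℓ : Sym2 V → ℝ) (e : Sym2 V) : ℝ :=
  1 / ℓ e - ∑ᶠ w ∈ {w : V | w ∈ e}, 1 / mval G ℓ w

/-- Boundary vertices of a subgraph. -/
def bdry (G : SimpleGraph V) (H : G.Subgraph) : Set V :=
  {v ∈ H.verts | (H.neighborSet v).ncard < (G.neighborSet v).ncard}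

/-- Total (subgraph-)degree of the boundary of a subgraph. -/
def degBdry (G : SimpleGraph V) (H : G.Subgraph) : ℝ :=
  ∑ᶠ v ∈ bdry G H, ((H.neighborSet v).ncard : ℝ)

/-- Isoperimetric constant of a metric graph. -/
def alpha (G : SimpleGraph V) (ℓ : Sym2 V → ℝ) : ℝ :=
  sInf {x | ∃ H : G.Subgraph, H.verts.Finite ∧ H.Connected ∧ H.edgeSet.Nonempty ∧
    x = degBdry G H / mes ℓ H.edgeSet}

/-- The star-like subgraph generated by a vertex set `U`: its edges are all the
edges of `G` incident to some vertex of `U`. -/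
def starSubgraph (G : SimpleGraph V) (U : Set V) : G.Subgraph where
  verts := U ∪ {w | ∃ u ∈ U, G.Adj u w}
  Adj u w := G.Adj u w ∧ (u ∈ U ∨ w ∈ U)
  adj_sub h := h.1
  edge_vert h := h.2.elim (fun h' => Or.inl h') (fun h' => Or.inr ⟨_, h', h.1.symm⟩)
  symm := ⟨fun u w h => ⟨h.1.symm, h.2.symm⟩⟩

/-!
A single edge `e` has both endpoints on its boundary (all degrees are at least `2`), so its ratio
is `2 / ℓ e`; together with the star-like subgraphs this bounds `α(G)` above by
`c := min (2 / ℓ*) α_S`. Conversely, `c · mes H ≤ deg ∂H` for every finite subgraph `H`, by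
induction on the number of edges: if some edge of `H` meets an interior vertex `u`, the component
`U` of `u` among the interior vertices splits `H` edge-disjointly into the star of `U` and the
rest, and the boundary degrees add up because every vertex keeps its boundary status in the piece
whose edges it meets; if no edge meets the interior, every edge contributes `2 ≥ c · ℓ e`.
-/

open SimpleGraph

section Boundary

variable {G : SimpleGraph V}

def interiorVerts (G : SimpleGraph V) (H : G.Subgraph) : Set V :=
  {v ∈ H.verts | G.neighborSet v ⊆ H.neighborSet v}

lemma SimpleGraph.Subgraph.edgeSet_finite {H : G.Subgraph} (hv : H.verts.Finite) :
    H.edgeSet.Finite := by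
  refine ((hv.prod hv).image Sym2.mk.uncurry).subset fun e he => ?_
  rw [← Set.sym2_eq_mk_image]
  induction e with
  | h a b => exact ⟨H.edge_vert he, H.edge_vert (H.adj_symm he)⟩

lemma SimpleGraph.Subgraph.edgeSet_deleteEdges (H : G.Subgraph) (s : Set (Sym2 V)) :
    (H.deleteEdges s).edgeSet = H.edgeSet \ s := by
  ext e
  induction e with
  | h a b => rfl

lemma SimpleGraph.Subgraph.ncard_neighborSet_eq_ncard_incidenceSet (H : G.Subgraph) (v : V) :
    (H.neighborSet v).ncard = (H.incidenceSet v).ncard :=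
  by classical exact (Nat.card_congr (H.spanningCoe.incidenceSetEquivNeighborSet v)).symm

lemma interiorVerts_mono {K H : G.Subgraph} (hKH : K ≤ H) :
    interiorVerts G K ⊆ interiorVerts G H :=
  fun _ hv => ⟨hKH.1 hv.1, hv.2.trans (Subgraph.neighborSet_subset_of_subgraph hKH _)⟩

lemma mem_bdry_iff {H : G.Subgraph} {v : V} (hv : (G.neighborSet v).Finite) :
    v ∈ bdry G H ↔ v ∈ H.verts ∧ v ∉ interiorVerts G H := by
  have hsub := H.neighborSet_subset v
  refine and_congr_right fun hvH => ⟨fun h hint => h.ne ?_, fun h => ?_⟩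
  · exact congrArg Set.ncard (hsub.antisymm hint.2)
  · exact Set.ncard_lt_ncard (hsub.ssubset_of_not_subset fun hGH => h ⟨hvH, hGH⟩) hv

lemma mem_bdry_iff_of_le {K H : G.Subgraph} {v : V} (hlf : (G.neighborSet v).Finite)
    (hKH : K ≤ H) (hvK : v ∈ K.verts) (hint : v ∈ interiorVerts G H → v ∈ interiorVerts G K) :
    v ∈ bdry G K ↔ v ∈ bdry G H := by
  rw [mem_bdry_iff hlf, mem_bdry_iff hlf]
  exact ⟨fun h => ⟨hKH.1 hvK, mt hint h.2⟩,
    fun h => ⟨hvK, fun hK => h.2 (interiorVerts_mono hKH hK)⟩⟩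

lemma degBdry_eq_finsum (H : G.Subgraph) (hv : H.verts.Finite) :
    degBdry G H = ∑ᶠ e ∈ H.edgeSet, ({v ∈ bdry G H | v ∈ e}.ncard : ℝ) := by
  classical
  have hB : (bdry G H).Finite := hv.subset fun _ hb => hb.1
  have hE := Subgraph.edgeSet_finite hv
  rw [degBdry, finsum_mem_eq_finite_toFinset_sum _ hB, finsum_mem_eq_finite_toFinset_sum _ hE]
  have hcount := Finset.sum_card_bipartiteAbove_eq_sum_card_bipartiteBelow
    (s := hB.toFinset) (t := hE.toFinset) (r := fun v e => v ∈ e)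
  have hdeg (v : V) : (H.neighborSet v).ncard = (hE.toFinset.bipartiteAbove (· ∈ ·) v).card := by
    rw [H.ncard_neighborSet_eq_ncard_incidenceSet, ← Set.ncard_coe_finset]
    congr 1
    ext
    simp [Finset.bipartiteAbove, Subgraph.incidenceSet]
  have hbd (e : Sym2 V) : {v ∈ bdry G H | v ∈ e}.ncard =
      (hB.toFinset.bipartiteBelow (· ∈ ·) e).card := by
    rw [← Set.ncard_coe_finset]
    congr 1
    ext
    simp [Finset.bipartiteBelow]
  simp only [hdeg, hbd]
  exact_mod_cast hcount

lemma SimpleGraph.Subgraph.edgeSet_eq_union_deleteEdges {K H : G.Subgraph} (hKH : K ≤ H) :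
    H.edgeSet = K.edgeSet ∪ (H.deleteEdges K.edgeSet).edgeSet := by
  rw [Subgraph.edgeSet_deleteEdges, Set.union_sdiff_cancel (Subgraph.edgeSet_mono hKH)]

lemma SimpleGraph.Subgraph.disjoint_edgeSet_deleteEdges (K H : G.Subgraph) :
    Disjoint K.edgeSet (H.deleteEdges K.edgeSet).edgeSet := by
  rw [Subgraph.edgeSet_deleteEdges]
  exact Set.disjoint_sdiff_right

lemma degBdry_eq_add_of_edgeSet_eq_union {H A B : G.Subgraph} (hH : H.verts.Finite)
    (hA : A.verts.Finite) (hB : B.verts.Finite) (hunion : H.edgeSet = A.edgeSet ∪ B.edgeSet)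
    (hdisj : Disjoint A.edgeSet B.edgeSet)
    (hbdryA : ∀ e ∈ A.edgeSet, ∀ v ∈ e, v ∈ bdry G A ↔ v ∈ bdry G H)
    (hbdryB : ∀ e ∈ B.edgeSet, ∀ v ∈ e, v ∈ bdry G B ↔ v ∈ bdry G H) :
    degBdry G H = degBdry G A + degBdry G B := by
  rw [degBdry_eq_finsum H hH, degBdry_eq_finsum A hA, degBdry_eq_finsum B hB, hunion,
    finsum_mem_union hdisj (Subgraph.edgeSet_finite hA) (Subgraph.edgeSet_finite hB)]
  congr 1
  · refine finsum_mem_congr rfl fun e he => ?_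
    congr 2
    ext v
    exact and_congr_left fun hv => (hbdryA e he v hv).symm
  · refine finsum_mem_congr rfl fun e he => ?_
    congr 2
    ext v
    exact and_congr_left fun hv => (hbdryB e he v hv).symm

end Boundary

section StarSubgraph

variable {G : SimpleGraph V} {U : Set V}

lemma starSubgraph_verts_finite (hlf : ∀ v : V, (G.neighborSet v).Finite) (hU : U.Finite) :
    (starSubgraph G U).verts.Finite := by
  refine hU.union ((hU.biUnion fun u _ => hlf u).subset ?_)
  rintro w ⟨u, hu, hadj⟩
  exact Set.mem_biUnion hu hadj

lemma starSubgraph_edgeSet_nonempty (hdeg : ∀ v : V, (G.neighborSet v).Nonempty)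
    (hU : U.Nonempty) : (starSubgraph G U).edgeSet.Nonempty := by
  obtain ⟨u, hu⟩ := hU
  obtain ⟨w, hw⟩ := hdeg u
  exact ⟨s(u, w), hw, Or.inl hu⟩

lemma starSubgraph_connected (hU : (G.induce U).Connected) :
    (starSubgraph G U).Connected := by
  set S := starSubgraph G U
  have hTS : (⊤ : G.Subgraph).induce U ≤ S :=
    ⟨Set.subset_union_left, fun _ _ h => ⟨h.2.2, Or.inl h.1⟩⟩
  have hT := (connected_induce_iff.mp hU).preconnected
  obtain ⟨⟨u₀, hu₀⟩⟩ := hU.nonempty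
  have hreach (u : V) (hu : u ∈ U) : S.coe.Reachable ⟨u₀, Or.inl hu₀⟩ ⟨u, Or.inl hu⟩ :=
    (hT ⟨u₀, hu₀⟩ ⟨u, hu⟩).map (Subgraph.inclusion hTS)
  rw [Subgraph.connected_iff', connected_iff_exists_forall_reachable]
  refine ⟨⟨u₀, Or.inl hu₀⟩, ?_⟩
  rintro ⟨v, hv | ⟨u, hu, huv⟩⟩
  · exact hreach v hv
  · exact (hreach u hu).trans (Adj.reachable (show S.Adj u v from ⟨huv, Or.inl hu⟩))

lemma mem_edgeSet_starSubgraph {e : Sym2 V} (he : e ∈ G.edgeSet) {u : V} (hue : u ∈ e)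
    (hu : u ∈ U) : e ∈ (starSubgraph G U).edgeSet := by
  induction e with
  | h a b =>
    rcases Sym2.mem_iff.mp hue with rfl | rfl
    · exact ⟨he, Or.inl hu⟩
    · exact ⟨he, Or.inr hu⟩

lemma starSubgraph_le {H : G.Subgraph} (hU : U ⊆ interiorVerts G H) : starSubgraph G U ≤ H := by
  have hadj {u w : V} (hu : u ∈ U) (huw : G.Adj u w) : H.Adj u w := (hU hu).2 huw
  refine ⟨?_, fun u w h => h.2.elim (fun hu => hadj hu h.1) fun hw => (hadj hw h.1.symm).symm⟩
  rintro v (hv | ⟨u, hu, huv⟩)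
  · exact (hU hv).1
  · exact H.edge_vert (hadj hu huv).symm

end StarSubgraph

lemma exists_induce_connected_closed {I : Set V} (G : SimpleGraph V) (hI : I.Finite) {u : V}
    (hu : u ∈ I) :
    ∃ U ⊆ I, u ∈ U ∧ (G.induce U).Connected ∧ ∀ x ∈ U, ∀ w ∈ I, G.Adj x w → w ∈ U := by
  set family := {U | U ⊆ I ∧ u ∈ U ∧ (G.induce U).Connected}
  have hfamily : family.Finite := hI.finite_subsets.subset fun _ hU => hU.1
  have hsingleton : {u} ∈ family := ⟨Set.singleton_subset_iff.2 hu, rfl, by simp⟩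
  obtain ⟨U, -, ⟨hUI, huU, hUconn⟩, hmax⟩ := hfamily.exists_le_maximal hsingleton
  refine ⟨U, hUI, huU, hUconn, fun x hx w hw hxw => ?_⟩
  have hlarger : U ∪ {x, w} ∈ family :=
    ⟨Set.union_subset hUI (Set.pair_subset (hUI hx) hw), Or.inl huU,
      induce_union_connected hUconn.preconnected (induce_pair_connected_of_adj hxw).preconnected
        ⟨x, hx, Or.inl rfl⟩⟩
  exact hmax hlarger Set.subset_union_left (Or.inr (Or.inr rfl))

section Peeling

variable {G : SimpleGraph V} {H : G.Subgraph} {U : Set V}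

lemma mem_interiorVerts_starSubgraph
    (hclosed : ∀ u ∈ U, ∀ w ∈ interiorVerts G H, G.Adj u w → w ∈ U) {v : V}
    (hv : v ∈ (starSubgraph G U).verts) (hvH : v ∈ interiorVerts G H) :
    v ∈ interiorVerts G (starSubgraph G U) := by
  have hvU : v ∈ U := hv.elim id fun ⟨u, hu, huv⟩ => hclosed u hu v hvH huv
  exact ⟨Or.inl hvU, fun w hw => ⟨hw, Or.inl hvU⟩⟩

lemma mem_interiorVerts_deleteEdges_starSubgraph
    (hclosed : ∀ u ∈ U, ∀ w ∈ interiorVerts G H, G.Adj u w → w ∈ U) {v : V}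
    (hvU : v ∉ U) (hvH : v ∈ interiorVerts G H) :
    v ∈ interiorVerts G (H.deleteEdges (starSubgraph G U).edgeSet) := by
  refine ⟨hvH.1, fun w hw => ⟨hvH.2 hw, ?_⟩⟩
  rintro ⟨-, hvU' | hwU⟩
  · exact hvU hvU'
  · exact hvU (hclosed w hwU v hvH (G.adj_symm hw))

lemma notMem_of_mem_edgeSet_deleteEdges_starSubgraph {e : Sym2 V}
    (he : e ∈ (H.deleteEdges (starSubgraph G U).edgeSet).edgeSet) {v : V} (hve : v ∈ e) :
    v ∉ U := by
  rw [Subgraph.edgeSet_deleteEdges] at he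
  exact fun hvU => he.2 (mem_edgeSet_starSubgraph (H.edgeSet_subset he.1) hve hvU)

lemma degBdry_eq_degBdry_starSubgraph_add (hlf : ∀ v : V, (G.neighborSet v).Finite)
    (hv : H.verts.Finite) (hUI : U ⊆ interiorVerts G H)
    (hclosed : ∀ u ∈ U, ∀ w ∈ interiorVerts G H, G.Adj u w → w ∈ U) :
    degBdry G H = degBdry G (starSubgraph G U) +
      degBdry G (H.deleteEdges (starSubgraph G U).edgeSet) := by
  have hSH := starSubgraph_le hUI
  refine degBdry_eq_add_of_edgeSet_eq_union hv (hv.subset hSH.1) hv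
    (Subgraph.edgeSet_eq_union_deleteEdges hSH) (Subgraph.disjoint_edgeSet_deleteEdges _ _)
    (fun e he v hve => ?_) (fun e he v hve => ?_)
  · have hvS := Subgraph.mem_verts_of_mem_edge he hve
    exact mem_bdry_iff_of_le (hlf v) hSH hvS (mem_interiorVerts_starSubgraph hclosed hvS)
  · exact mem_bdry_iff_of_le (hlf v) (Subgraph.deleteEdges_le _)
      (Subgraph.mem_verts_of_mem_edge he hve) (mem_interiorVerts_deleteEdges_starSubgraph hclosed
        (notMem_of_mem_edgeSet_deleteEdges_starSubgraph he hve))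

end Peeling

section Isoperimetry

variable {G : SimpleGraph V} {ℓ : Sym2 V → ℝ}

lemma ncard_setOf_mem_of_mem_edgeSet {B : Set V} {e : Sym2 V} (he : e ∈ G.edgeSet)
    (hB : ∀ v ∈ e, v ∈ B) : {v ∈ B | v ∈ e}.ncard = 2 := by
  induction e with
  | h a b =>
    have hpair : {v ∈ B | v ∈ s(a, b)} = {a, b} := by
      ext v
      simp only [Set.mem_ofPred_eq, Sym2.mem_iff, Set.mem_insert_iff, Set.mem_singleton_iff]
      exact ⟨And.right, fun hv => ⟨hB v (Sym2.mem_iff.2 hv), hv⟩⟩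
    rw [hpair, Set.ncard_pair (G.ne_of_adj he)]

lemma mes_eq_mes_add_deleteEdges {K H : G.Subgraph} (hKH : K ≤ H) (hv : H.verts.Finite) :
    mes ℓ H.edgeSet = mes ℓ K.edgeSet + mes ℓ (H.deleteEdges K.edgeSet).edgeSet := by
  have hE := Subgraph.edgeSet_finite hv
  rw [mes, Subgraph.edgeSet_eq_union_deleteEdges hKH,
    finsum_mem_union (Subgraph.disjoint_edgeSet_deleteEdges K H)
      (hE.subset (Subgraph.edgeSet_mono hKH))
      (hE.subset (Subgraph.edgeSet_mono (Subgraph.deleteEdges_le _))), mes, mes]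

lemma mul_mes_le_degBdry_of_forall_notMem_interiorVerts
    (hlf : ∀ v : V, (G.neighborSet v).Finite) {c : ℝ} (hedge : ∀ e ∈ G.edgeSet, c * ℓ e ≤ 2)
    {H : G.Subgraph} (hv : H.verts.Finite)
    (hint : ∀ e ∈ H.edgeSet, ∀ v ∈ e, v ∉ interiorVerts G H) :
    c * mes ℓ H.edgeSet ≤ degBdry G H := by
  have hE := Subgraph.edgeSet_finite hv
  rw [degBdry_eq_finsum H hv, mes, mul_finsum_mem, finsum_mem_eq_finite_toFinset_sum _ hE,
    finsum_mem_eq_finite_toFinset_sum _ hE]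
  refine Finset.sum_le_sum fun e he => ?_
  rw [Set.Finite.mem_toFinset] at he
  rw [ncard_setOf_mem_of_mem_edgeSet (H.edgeSet_subset he) fun v hve =>
    (mem_bdry_iff (hlf v)).2 ⟨Subgraph.mem_verts_of_mem_edge he hve, hint e he v hve⟩]
  exact_mod_cast hedge e (H.edgeSet_subset he)

theorem mul_mes_le_degBdry (hlf : ∀ v : V, (G.neighborSet v).Finite) {c : ℝ}
    (hedge : ∀ e ∈ G.edgeSet, c * ℓ e ≤ 2)
    (hstar : ∀ U : Set V, U.Finite → U.Nonempty → (G.induce U).Connected →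
      c * mes ℓ (starSubgraph G U).edgeSet ≤ degBdry G (starSubgraph G U))
    (H : G.Subgraph) (hv : H.verts.Finite) : c * mes ℓ H.edgeSet ≤ degBdry G H := by
  induction hn : H.edgeSet.ncard using Nat.strong_induction_on generalizing H with
  | _ n ih =>
  by_cases hint : ∃ e ∈ H.edgeSet, ∃ u ∈ e, u ∈ interiorVerts G H
  · obtain ⟨e, he, u, hue, hu⟩ := hint
    obtain ⟨U, hUI, huU, hUconn, hclosed⟩ :=
      exists_induce_connected_closed G (hv.subset fun _ h => h.1) hu
    set S := starSubgraph G U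
    set H' := H.deleteEdges S.edgeSet
    have hSH := starSubgraph_le hUI
    have heS : e ∈ S.edgeSet := mem_edgeSet_starSubgraph (H.edgeSet_subset he) hue huU
    have hlt : H'.edgeSet.ncard < n := by
      rw [← hn, Subgraph.edgeSet_deleteEdges]
      exact Set.ncard_lt_ncard (LE.le.sdiff_ssubset_of_nonempty (Subgraph.edgeSet_mono hSH)
        ⟨e, heS⟩) (Subgraph.edgeSet_finite hv)
    calc c * mes ℓ H.edgeSet = c * mes ℓ S.edgeSet + c * mes ℓ H'.edgeSet := by
          rw [← mul_add, mes_eq_mes_add_deleteEdges hSH hv]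
      _ ≤ degBdry G S + degBdry G H' :=
          add_le_add (hstar U (hv.subset (hUI.trans fun _ h => h.1)) ⟨u, huU⟩ hUconn)
            (ih _ hlt H' hv rfl)
      _ = degBdry G H := (degBdry_eq_degBdry_starSubgraph_add hlf hv hUI hclosed).symm
  · push Not at hint
    exact mul_mes_le_degBdry_of_forall_notMem_interiorVerts hlf hedge hv hint

lemma mes_nonneg (hpos : ∀ e ∈ G.edgeSet, 0 < ℓ e) (H : G.Subgraph) : 0 ≤ mes ℓ H.edgeSet :=
  finsum_mem_induction (0 ≤ ·) le_rfl (fun _ _ => add_nonneg)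
    fun e he => (hpos e (H.edgeSet_subset he)).le

lemma mes_pos (hpos : ∀ e ∈ G.edgeSet, 0 < ℓ e) {H : G.Subgraph} (hv : H.verts.Finite)
    (hne : H.edgeSet.Nonempty) : 0 < mes ℓ H.edgeSet := by
  have hE := Subgraph.edgeSet_finite hv
  rw [mes, finsum_mem_eq_finite_toFinset_sum _ hE]
  exact Finset.sum_pos (fun e he => hpos e (H.edgeSet_subset (hE.mem_toFinset.1 he)))
    (hE.toFinset_nonempty.2 hne)

lemma degBdry_nonneg (H : G.Subgraph) : 0 ≤ degBdry G H :=
  finsum_mem_induction (0 ≤ ·) le_rfl (fun _ _ => add_nonneg) fun _ _ => Nat.cast_nonneg _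

lemma degBdry_subgraphOfAdj (hdeg : ∀ v : V, 2 ≤ (G.neighborSet v).ncard) {v w : V}
    (hvw : G.Adj v w) : degBdry G (G.subgraphOfAdj hvw) = 2 := by
  have hbdry : bdry G (G.subgraphOfAdj hvw) = {v, w} := by
    refine Set.Subset.antisymm (fun x hx => hx.1) ?_
    rintro x (rfl | rfl)
    · refine ⟨Or.inl rfl, ?_⟩
      rw [neighborSet_fst_subgraphOfAdj, Set.ncard_singleton]
      exact hdeg x
    · refine ⟨Or.inr rfl, ?_⟩
      rw [neighborSet_snd_subgraphOfAdj, Set.ncard_singleton]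
      exact hdeg x
  rw [degBdry, hbdry, finsum_mem_pair hvw.ne, neighborSet_fst_subgraphOfAdj,
    neighborSet_snd_subgraphOfAdj, Set.ncard_singleton, Set.ncard_singleton]
  norm_num

lemma degBdry_div_mes_nonneg (hpos : ∀ e ∈ G.edgeSet, 0 < ℓ e) (H : G.Subgraph) :
    0 ≤ degBdry G H / mes ℓ H.edgeSet :=
  div_nonneg (degBdry_nonneg H) (mes_nonneg hpos H)

lemma alpha_le (hpos : ∀ e ∈ G.edgeSet, 0 < ℓ e) {H : G.Subgraph} (hv : H.verts.Finite)
    (hconn : H.Connected) (hne : H.edgeSet.Nonempty) :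
    alpha G ℓ ≤ degBdry G H / mes ℓ H.edgeSet := by
  refine csInf_le ⟨0, ?_⟩ ⟨H, hv, hconn, hne, rfl⟩
  rintro _ ⟨K, -, -, -, rfl⟩
  exact degBdry_div_mes_nonneg hpos K

lemma alpha_mul_le_two (hpos : ∀ e ∈ G.edgeSet, 0 < ℓ e)
    (hdeg : ∀ v : V, 2 ≤ (G.neighborSet v).ncard) {e : Sym2 V} (he : e ∈ G.edgeSet) :
    alpha G ℓ * ℓ e ≤ 2 := by
  induction e with
  | h v w =>
    have hvw : G.Adj v w := he
    have h := alpha_le hpos (ℓ := ℓ) ((Set.finite_singleton w).insert v)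
      (Subgraph.subgraphOfAdj_connected hvw) ⟨s(v, w), rfl⟩
    rwa [degBdry_subgraphOfAdj hdeg, edgeSet_subgraphOfAdj, mes, finsum_mem_singleton,
      le_div_iff₀ (hpos _ he)] at h

lemma alpha_le_two_div_sSup (hpos : ∀ e ∈ G.edgeSet, 0 < ℓ e)
    (hdeg : ∀ v : V, 2 ≤ (G.neighborSet v).ncard) (hbdd : BddAbove (ℓ '' G.edgeSet))
    (hE : G.edgeSet.Nonempty) : alpha G ℓ ≤ 2 / sSup (ℓ '' G.edgeSet) := by
  obtain ⟨e₀, he₀⟩ := hE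
  have hL : 0 < sSup (ℓ '' G.edgeSet) := (hpos e₀ he₀).trans_le (le_csSup hbdd ⟨e₀, he₀, rfl⟩)
  rcases le_or_gt (alpha G ℓ) 0 with hα | hα
  · exact hα.trans (by positivity)
  · rw [le_div_iff₀ hL, mul_comm, ← le_div_iff₀ hα]
    refine csSup_le ⟨_, e₀, he₀, rfl⟩ ?_
    rintro _ ⟨e, he, rfl⟩
    rw [le_div_iff₀ hα, mul_comm]
    exact alpha_mul_le_two hpos hdeg he

lemma two_div_sSup_mul_le (hpos : ∀ e ∈ G.edgeSet, 0 < ℓ e) (hbdd : BddAbove (ℓ '' G.edgeSet))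
    {e : Sym2 V} (he : e ∈ G.edgeSet) : 2 / sSup (ℓ '' G.edgeSet) * ℓ e ≤ 2 := by
  have hle : ℓ e ≤ sSup (ℓ '' G.edgeSet) := le_csSup hbdd ⟨e, he, rfl⟩
  rw [div_mul_eq_mul_div, div_le_iff₀ ((hpos e he).trans_le hle)]
  exact mul_le_mul_of_nonneg_left hle zero_le_two

lemma le_alpha (hE : G.edgeSet.Nonempty) (hpos : ∀ e ∈ G.edgeSet, 0 < ℓ e) {c : ℝ}
    (h : ∀ H : G.Subgraph, H.verts.Finite → c * mes ℓ H.edgeSet ≤ degBdry G H) :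
    c ≤ alpha G ℓ := by
  obtain ⟨e, he⟩ := hE
  induction e with
  | h v w =>
  refine le_csInf ⟨_, G.subgraphOfAdj he, (Set.finite_singleton w).insert v,
    Subgraph.subgraphOfAdj_connected he, ⟨s(v, w), rfl⟩, rfl⟩ ?_
  rintro _ ⟨H, hv, -, hne, rfl⟩
  exact (le_div_iff₀ (mes_pos hpos hv hne)).2 (h H hv)

def alphaStar (G : SimpleGraph V) (ℓ : Sym2 V → ℝ) : ℝ :=
  sInf {x | ∃ U : Set V, U.Finite ∧ U.Nonempty ∧ (G.induce U).Connected ∧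
    x = degBdry G (starSubgraph G U) / mes ℓ (starSubgraph G U).edgeSet}

lemma alpha_le_alphaStar [Nonempty V] (hlf : ∀ v : V, (G.neighborSet v).Finite)
    (hnbr : ∀ v : V, (G.neighborSet v).Nonempty) (hpos : ∀ e ∈ G.edgeSet, 0 < ℓ e) :
    alpha G ℓ ≤ alphaStar G ℓ := by
  obtain ⟨v⟩ := ‹Nonempty V›
  refine le_csInf ⟨_, {v}, Set.finite_singleton v, Set.singleton_nonempty v, by simp, rfl⟩ ?_
  rintro _ ⟨U, hU, hUne, hUconn, rfl⟩
  exact alpha_le hpos (starSubgraph_verts_finite hlf hU) (starSubgraph_connected hUconn)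
    (starSubgraph_edgeSet_nonempty hnbr hUne)

lemma alphaStar_mul_mes_le (hlf : ∀ v : V, (G.neighborSet v).Finite)
    (hnbr : ∀ v : V, (G.neighborSet v).Nonempty) (hpos : ∀ e ∈ G.edgeSet, 0 < ℓ e) {U : Set V}
    (hU : U.Finite) (hUne : U.Nonempty) (hUconn : (G.induce U).Connected) :
    alphaStar G ℓ * mes ℓ (starSubgraph G U).edgeSet ≤ degBdry G (starSubgraph G U) := by
  have hbelow : BddBelow {x | ∃ U : Set V, U.Finite ∧ U.Nonempty ∧ (G.induce U).Connected ∧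
      x = degBdry G (starSubgraph G U) / mes ℓ (starSubgraph G U).edgeSet} := by
    refine ⟨0, ?_⟩
    rintro _ ⟨U, -, -, -, rfl⟩
    exact degBdry_div_mes_nonneg hpos _
  rw [← le_div_iff₀ (mes_pos hpos (starSubgraph_verts_finite hlf hU)
    (starSubgraph_edgeSet_nonempty hnbr hUne))]
  exact csInf_le hbelow ⟨U, hU, hUne, hUconn, rfl⟩

end Isoperimetry

theorem statement_0_general {V : Type*} [Infinite V] (G : SimpleGraph V)
    (hlf : ∀ v : V, (G.neighborSet v).Finite)
    (hdeg : ∀ v : V, 2 ≤ (G.neighborSet v).ncard)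
    (ℓ : Sym2 V → ℝ) (hpos : ∀ e ∈ G.edgeSet, 0 < ℓ e)
    (hbdd : BddAbove (ℓ '' G.edgeSet)) :
    alpha G ℓ =
      min (2 / sSup (ℓ '' G.edgeSet))
        (sInf {x | ∃ U : Set V, U.Finite ∧ U.Nonempty ∧ (G.induce U).Connected ∧
          x = degBdry G (starSubgraph G U) / mes ℓ (starSubgraph G U).edgeSet}) := by
  change alpha G ℓ = min (2 / sSup (ℓ '' G.edgeSet)) (alphaStar G ℓ)
  have hnbr (v : V) : (G.neighborSet v).Nonempty :=
    Set.nonempty_of_ncard_ne_zero (by linarith [hdeg v])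
  obtain ⟨v₀⟩ := (inferInstance : Nonempty V)
  obtain ⟨w₀, hw₀⟩ := hnbr v₀
  have hE : G.edgeSet.Nonempty := ⟨s(v₀, w₀), hw₀⟩
  refine le_antisymm (le_min (alpha_le_two_div_sSup hpos hdeg hbdd hE)
    (alpha_le_alphaStar hlf hnbr hpos)) (le_alpha hE hpos fun H hv => ?_)
  refine mul_mes_le_degBdry hlf (fun e he => ?_) (fun U hU hUne hUconn => ?_) H hv
  · exact (mul_le_mul_of_nonneg_right (min_le_left _ _) (hpos e he).le).trans
      (two_div_sSup_mul_le hpos hbdd he)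
  · exact (mul_le_mul_of_nonneg_right (min_le_right _ _) (mes_nonneg hpos _)).trans
      (alphaStar_mul_mes_le hlf hnbr hpos hU hUne hUconn)

/-- For a connected, locally finite, infinite simple graph with all degrees
at least 2 and bounded edge lengths, the isoperimetric constant equals the minimum of
`2/ℓ*` and the infimum of the isoperimetric ratios over star-like subgraphs. -/
theorem statement_0 {V : Type*} [Infinite V] (G : SimpleGraph V)
    (hconn : G.Connected) (hlf : ∀ v : V, (G.neighborSet v).Finite)
    (hdeg : ∀ v : V, 2 ≤ (G.neighborSet v).ncard)
    (ℓ : Sym2 V → ℝ) (hpos : ∀ e ∈ G.edgeSet, 0 < ℓ e)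
    (hbdd : BddAbove (ℓ '' G.edgeSet)) :
    alpha G ℓ =
      min (2 / sSup (ℓ '' G.edgeSet))
        (sInf {x | ∃ U : Set V, U.Finite ∧ U.Nonempty ∧ (G.induce U).Connected ∧
          x = degBdry G (starSubgraph G U) / mes ℓ (starSubgraph G U).edgeSet}) :=
  statement_0_general G hlf hdeg ℓ hpos hbdd
end
end

section
/- Let D, Q, M, P, L, c be real numbers with 3 ≤ D ≤ M, 3 ≤ Q ≤ P, L > 0, and 0 < c ≤ (1/L)·(1 − 2/D − 2/Q). Set K := 1 − 1/M − 2/P − 1/((M−2)·P). Then c/K ≤ (D−2)/((D−1)·L). -/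
/-- inequality (3.12): if `3 ≤ D ≤ M`, `3 ≤ Q ≤ P`, `L > 0` and
`0 < c ≤ (1/L)·(1 − 2/D − 2/Q)`, then with `K := 1 − 1/M − 2/P − 1/((M−2)·P)` one has
`c/K ≤ (D−2)/((D−1)·L)`. -/
theorem statement_5 (D Q M P L c : ℝ) (hD : 3 ≤ D) (hDM : D ≤ M) (hQ : 3 ≤ Q) (hQP : Q ≤ P)
    (hL : 0 < L) (hc : 0 < c) (hcle : c ≤ (1 / L) * (1 - 2 / D - 2 / Q)) :
    c / (1 - 1 / M - 2 / P - 1 / ((M - 2) * P)) ≤ (D - 2) / ((D - 1) * L) := by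
  have hD0 : (0:ℝ) < D := by linarith
  have hQ0 : (0:ℝ) < Q := by linarith
  have hM0 : (0:ℝ) < M := by linarith
  have hP0 : (0:ℝ) < P := by linarith
  have hD2 : (0:ℝ) < D - 2 := by linarith
  have hD1 : (0:ℝ) < D - 1 := by linarith
  have hM2 : (0:ℝ) < M - 2 := by linarith
  -- A := 1 - 2/D - 2/Q > 0
  have hA : 0 < 1 - 2 / D - 2 / Q := by
    by_contra h
    push_neg at h
    have : (1 / L) * (1 - 2 / D - 2 / Q) ≤ 0 := by
      apply mul_nonpos_of_nonneg_of_nonpos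
      · positivity
      · exact h
    linarith
  -- monotone bounds
  have h1 : 1 / M ≤ 1 / D := one_div_le_one_div_of_le hD0 hDM
  have h2 : 2 / P ≤ 2 / Q := by
    apply div_le_div_of_nonneg_left (by norm_num) hQ0 hQP
  have h3 : 1 / ((M - 2) * P) ≤ 1 / ((D - 2) * Q) := by
    apply one_div_le_one_div_of_le (by positivity)
    apply mul_le_mul (by linarith) hQP (le_of_lt hQ0) (le_of_lt hM2)
  -- key algebraic identity with D, Q only
  have hkey : (D - 2) * (1 - 1 / D - 2 / Q - 1 / ((D - 2) * Q)) -
      (D - 1) * (1 - 2 / D - 2 / Q) = 1 / Q := by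
    field_simp
    ring
  set K := 1 - 1 / M - 2 / P - 1 / ((M - 2) * P) with hKdef
  have hKge : (D - 1) * (1 - 2 / D - 2 / Q) + 1 / Q ≤ (D - 2) * K := by
    have : (D - 2) * (1 - 1 / D - 2 / Q - 1 / ((D - 2) * Q)) ≤ (D - 2) * K := by
      apply mul_le_mul_of_nonneg_left _ (le_of_lt hD2)
      rw [hKdef]; linarith
    linarith
  have hKpos : 0 < K := by
    have h4 : 0 < (D - 1) * (1 - 2 / D - 2 / Q) + 1 / Q := by positivity
    have h5 := lt_of_lt_of_le h4 hKge
    nlinarith [h5, hD2]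
  -- main inequality
  rw [div_le_div_iff₀ hKpos (by positivity)]
  have hcL : c * L ≤ 1 - 2 / D - 2 / Q := by
    have := mul_le_mul_of_nonneg_right hcle (le_of_lt hL)
    calc c * L ≤ (1 / L) * (1 - 2 / D - 2 / Q) * L := this
      _ = 1 - 2 / D - 2 / Q := by field_simp
  have h1Q : 0 < 1 / Q := by positivity
  calc c * ((D - 1) * L) = (c * L) * (D - 1) := by ring
    _ ≤ (1 - 2 / D - 2 / Q) * (D - 1) := by
        apply mul_le_mul_of_nonneg_right hcL (le_of_lt hD1)
    _ ≤ (D - 2) * K := by linarith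
end

section
/- Let p, q be real numbers with p ≥ 3, q ≥ 3 and c := 1 − 2/p − 2/q > 0, and set a := ((p−2)/p)·√(1 − 4/((p−2)·(q−2))). Then 2a/(a+1) ≥ q·(p−2)·c / (q·(p−1)·c + 1). -/
/-!
With `t := pqc > 0` one has `(p-2)(q-2) = t + 4`, and `(t/(t+2))² ≤ t/(t+4) = 1 - 4/(t+4)` since
`t(t+4) ≤ (t+2)²`; hence `a ≥ b := ((p-2)/p)·t/(t+2)`. As `x ↦ 2x/(x+1)` is monotone on `[0, ∞)`,
`2a/(a+1) ≥ 2b/(b+1)`, and `2b/(b+1)` is exactly `q(p-2)c/(q(p-1)c+1)`.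
-/

lemma div_add_two_le_sqrt_one_sub_four_div {t : ℝ} (ht : 0 ≤ t) :
    t / (t + 2) ≤ Real.sqrt (1 - 4 / (t + 4)) := by
  apply Real.le_sqrt_of_sq_le
  rw [div_pow, div_le_iff₀ (by positivity), one_sub_div (by positivity), div_mul_eq_mul_div,
    le_div_iff₀ (by positivity)]
  nlinarith

lemma two_mul_div_add_one_le {x y : ℝ} (hx : 0 ≤ x) (hxy : x ≤ y) :
    2 * x / (x + 1) ≤ 2 * y / (y + 1) := by
  rw [div_le_div_iff₀ (by linarith) (by linarith)]
  linarith

/-- for `p, q ≥ 3` with `c := 1 − 2/p − 2/q > 0` and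
`a := ((p−2)/p)·√(1 − 4/((p−2)(q−2)))`, one has `2a/(a+1) ≥ q(p−2)c/(q(p−1)c + 1)`. -/
theorem statement_10 (p q : ℝ) (hp : 3 ≤ p) (hq : 3 ≤ q)
    (c : ℝ) (hc : c = 1 - 2 / p - 2 / q) (hcpos : 0 < c)
    (a : ℝ) (ha : a = ((p - 2) / p) * Real.sqrt (1 - 4 / ((p - 2) * (q - 2)))) :
    q * (p - 2) * c / (q * (p - 1) * c + 1) ≤ 2 * a / (a + 1) := by
  have hp0 : 0 < p := by linarith
  have hq0 : 0 < q := by linarith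
  have hs : (p - 2) * (q - 2) = p * q * c + 4 := by
    rw [hc]; field_simp; ring
  set b := (p - 2) / p * (p * q * c / (p * q * c + 2))
  have hp2 : 0 ≤ (p - 2) / p := div_nonneg (by linarith) hp0.le
  have hb0 : 0 ≤ b := by positivity
  have hba : b ≤ a := by
    rw [ha, hs]
    exact mul_le_mul_of_nonneg_left (div_add_two_le_sqrt_one_sub_four_div (by positivity)) hp2
  calc q * (p - 2) * c / (q * (p - 1) * c + 1) = 2 * b / (b + 1) := by
        have hp1 : 0 < p - 1 := by linarith
        have hd : 0 < q * (p - 1) * c + 1 := by positivity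
        rw [div_eq_div_iff hd.ne' (by linarith)]
        simp only [b]
        field_simp
        ring
    _ ≤ 2 * a / (a + 1) := two_mul_div_add_one_le hb0 hba
end

section
/- Let G = (V,E) be an infinite, locally finite tree (a connected acyclic simple graph) in which every vertex has degree at least 2, equipped with edge lengths ℓ : E → (0,∞) such that ℓ* := sup_{e∈E} ℓ(e) < ∞. For an edge e with endpoints u and v set c(e) := 1/ℓ(e) − 1/m(u) − 1/m(v). Suppose there exist ε > 0 and M₀ > 0 such that every star-like subgraph G̃ of G with mes(G̃) ≥ M₀ satisfies Σ_{e∈Ẽ} c(e)·ℓ(e) ≥ ε·mes(G̃). Then α(G) > 0. -/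
open scoped BigOperators

noncomputable section

variable {V : Type*}

/-!
Let `I` be the vertices of a finite subgraph `H` that are not on its boundary. Every edge of `H`
either meets `I` or joins two boundary vertices, and the latter have total length at most `ℓ*`
times their number. Split `I` into maximal connected pieces `C`. Since `∑_{e ∋ w} ℓ(e)/m(w) = 1`
at every vertex, the sum of `c(e) ℓ(e)` over the star of `C` is at most `#star − #C`, which in a
tree is `#∂C − 1` with `∂C` the edges leaving `C`. Large stars thus satisfy `ε · mes ≤ #∂C`, and small
ones `mes < M₀ ≤ M₀ · #∂C` because `∂C ≠ ∅` in an infinite connected graph. The edges leaving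
`I` and the edges between boundary vertices are all counted in `deg(∂H)`, so
`mes(H) ≤ (max(1/ε, M₀) + ℓ*) · deg(∂H)`.
-/

namespace SimpleGraph

variable {G : SimpleGraph V}

def edgesMeeting (G : SimpleGraph V) (U : Set V) : Set (Sym2 V) :=
  {e ∈ G.edgeSet | ∃ u ∈ U, u ∈ e}

def edgesInside (G : SimpleGraph V) (U : Set V) : Set (Sym2 V) :=
  {e ∈ G.edgeSet | ∀ u ∈ e, u ∈ U}

def edgeBoundary (G : SimpleGraph V) (U : Set V) : Set (Sym2 V) :=
  G.edgesMeeting U \ G.edgesInside U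

lemma mem_edgeBoundary {U : Set V} {e : Sym2 V} :
    e ∈ G.edgeBoundary U ↔ e ∈ G.edgeSet ∧ (∃ u ∈ U, u ∈ e) ∧ ∃ w ∈ e, w ∉ U := by
  simp only [edgeBoundary, edgesMeeting, edgesInside, Set.mem_sdiff, Set.mem_ofPred_eq]
  grind

lemma starSubgraph_edgeSet (U : Set V) : (starSubgraph G U).edgeSet = G.edgesMeeting U := by
  ext e
  induction e with
  | _ x y =>
    simp only [starSubgraph, edgesMeeting, Subgraph.mem_edgeSet, Set.mem_ofPred_eq,
      mem_edgeSet, Sym2.mem_iff, and_or_left, exists_or, exists_eq_right]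

lemma edgesMeeting_union (S T : Set V) :
    G.edgesMeeting (S ∪ T) = G.edgesMeeting S ∪ G.edgesMeeting T := by
  ext e
  simp only [edgesMeeting, Set.mem_union, Set.mem_ofPred_eq]
  grind

lemma edgesInside_subset_edgesMeeting (U : Set V) : G.edgesInside U ⊆ G.edgesMeeting U := by
  rintro e ⟨he, hU⟩
  exact ⟨he, e.out.1, hU _ (Sym2.out_fst_mem e), Sym2.out_fst_mem e⟩

lemma incidenceSet_finite (hlf : ∀ v, (G.neighborSet v).Finite) (v : V) :
    (G.incidenceSet v).Finite := by
  classical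
  have := (hlf v).to_subtype
  exact Set.finite_coe_iff.mp (Finite.of_equiv _ (G.incidenceSetEquivNeighborSet v).symm)

lemma edgesMeeting_finite (hlf : ∀ v, (G.neighborSet v).Finite) {U : Set V} (hU : U.Finite) :
    (G.edgesMeeting U).Finite :=
  (hU.biUnion fun u _ => G.incidenceSet_finite hlf u).subset
    fun _ ⟨he, _, hu, hue⟩ => Set.mem_biUnion hu ⟨he, hue⟩

lemma edgeBoundary_finite (hlf : ∀ v, (G.neighborSet v).Finite) {U : Set V} (hU : U.Finite) :
    (G.edgeBoundary U).Finite :=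
  (G.edgesMeeting_finite hlf hU).subset Set.sdiff_subset

lemma ncard_edgesMeeting (hlf : ∀ v, (G.neighborSet v).Finite) {U : Set V} (hU : U.Finite) :
    (G.edgesMeeting U).ncard = (G.edgesInside U).ncard + (G.edgeBoundary U).ncard := by
  rw [edgeBoundary, add_comm, Set.ncard_sdiff_add_ncard_of_subset
    (G.edgesInside_subset_edgesMeeting U) (G.edgesMeeting_finite hlf hU)]

lemma edgesInside_eq_image (C : Set V) :
    G.edgesInside C = Sym2.map (↑) '' (G.induce C).edgeSet := by
  ext e
  induction e with
  | _ x y =>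
    simp only [edgesInside, Set.mem_ofPred_eq, mem_edgeSet, Sym2.mem_iff, forall_eq_or_imp,
      forall_eq, Set.mem_image]
    constructor
    · rintro ⟨hxy, hx, hy⟩
      exact ⟨s(⟨x, hx⟩, ⟨y, hy⟩), hxy, rfl⟩
    · rintro ⟨e', he', hmap⟩
      induction e' with
      | _ a b =>
        rw [Sym2.map_mk, Sym2.eq_iff] at hmap
        have hab : G.Adj a b := he'
        rcases hmap with ⟨rfl, rfl⟩ | ⟨rfl, rfl⟩
        · exact ⟨hab, a.2, b.2⟩
        · exact ⟨hab.symm, b.2, a.2⟩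

lemma ncard_edgesInside_add_one (hacyc : G.IsAcyclic) {C : Set V} (hC : C.Finite)
    (hconn : (G.induce C).Connected) : (G.edgesInside C).ncard + 1 = C.ncard := by
  have := hC.to_subtype
  have htree : (G.induce C).IsTree := ⟨hconn, hacyc.induce C⟩
  rw [edgesInside_eq_image,
    Set.ncard_image_of_injective _ (Sym2.map.injective Subtype.val_injective),
    ← Nat.card_coe_set_eq, ← Nat.card_coe_set_eq C]
  exact (isTree_iff_connected_and_card.mp htree).2

lemma edgeBoundary_nonempty [Infinite V] (hconn : G.Connected) {C : Set V} (hC : C.Finite)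
    (hne : C.Nonempty) : (G.edgeBoundary C).Nonempty := by
  obtain ⟨u, hu⟩ := hne
  obtain ⟨w, hw⟩ := hC.infinite_compl.nonempty
  obtain ⟨d, -, hd, hd'⟩ := (hconn.preconnected u w).some.exists_boundary_dart C hu hw
  exact ⟨d.edge, mem_edgeBoundary.mpr
    ⟨d.edge_mem, ⟨d.fst, hd, Sym2.mem_mk_left _ _⟩, d.snd, Sym2.mem_mk_right _ _, hd'⟩⟩

lemma edgeBoundary_subset_edgeBoundary_union {S T : Set V}
    (hST : Disjoint (G.edgesMeeting S) (G.edgesMeeting T)) :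
    G.edgeBoundary S ⊆ G.edgeBoundary (S ∪ T) := by
  intro e he
  obtain ⟨heG, ⟨u, hu, hue⟩, w, hwe, hwS⟩ := mem_edgeBoundary.mp he
  refine mem_edgeBoundary.mpr ⟨heG, ⟨u, Or.inl hu, hue⟩, w, hwe, ?_⟩
  rintro (hwS' | hwT)
  · exact hwS hwS'
  · exact Set.disjoint_left.mp hST ⟨heG, u, hu, hue⟩ ⟨heG, w, hwT, hwe⟩

lemma edgeBoundary_union_subset {S T : Set V}
    (hST : Disjoint (G.edgesMeeting S) (G.edgesMeeting T)) :
    G.edgeBoundary S ∪ G.edgeBoundary T ⊆ G.edgeBoundary (S ∪ T) :=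
  Set.union_subset (edgeBoundary_subset_edgeBoundary_union hST)
    (Set.union_comm S T ▸ edgeBoundary_subset_edgeBoundary_union hST.symm)

lemma exists_connected_subset_adj_closed {I : Set V} (hI : I.Finite) {x : V} (hx : x ∈ I) :
    ∃ C ⊆ I, x ∈ C ∧ (G.induce C).Connected ∧ ∀ c ∈ C, ∀ y ∈ I, G.Adj c y → y ∈ C := by
  obtain ⟨C, ⟨hCI, hxC, hC⟩, hmax⟩ := (hI.finite_subsets.subset
    fun C (hC : C ⊆ I ∧ x ∈ C ∧ (G.induce C).Connected) => hC.1).exists_maximal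
    ⟨{x}, Set.singleton_subset_iff.mpr hx, rfl, by simp⟩
  refine ⟨C, hCI, hxC, hC, fun c hc y hy hcy => ?_⟩
  have hCy : (G.induce (C ∪ {y})).Connected :=
    G.connected_induce_union hC.preconnected (by simp) hc rfl hcy
  exact hmax ⟨Set.union_subset hCI (Set.singleton_subset_iff.mpr hy), Or.inl hxC, hCy⟩
    Set.subset_union_left (Or.inr rfl)

lemma Subgraph.edgeSet_subset_edgesMeeting_verts (H : G.Subgraph) :
    H.edgeSet ⊆ G.edgesMeeting H.verts := by
  intro e he
  induction e with
  | _ x y => exact ⟨H.edgeSet_subset he, x, he.fst_mem, Sym2.mem_mk_left x y⟩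

end SimpleGraph

open SimpleGraph

section

variable {G : SimpleGraph V} {ℓ : Sym2 V → ℝ}

lemma mes_union {E F : Set (Sym2 V)} (hEF : Disjoint E F) (hE : E.Finite) (hF : F.Finite) :
    mes ℓ (E ∪ F) = mes ℓ E + mes ℓ F :=
  finsum_mem_union hEF hE hF

lemma mes_nonneg_s14 {E : Set (Sym2 V)} (hE : ∀ e ∈ E, 0 ≤ ℓ e) : 0 ≤ mes ℓ E :=
  finsum_nonneg fun e => finsum_nonneg (hE e)

lemma mes_pos_s14 {E : Set (Sym2 V)} (hE : ∀ e ∈ E, 0 < ℓ e) (hfin : E.Finite) (hne : E.Nonempty) :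
    0 < mes ℓ E := by
  rw [mes, finsum_mem_eq_finite_toFinset_sum _ hfin]
  exact Finset.sum_pos (fun e he => hE e (hfin.mem_toFinset.mp he)) (hfin.toFinset_nonempty.mpr hne)

lemma mes_le_mul_ncard {E : Set (Sym2 V)} (hE : E.Finite) {K : ℝ} (hK : ∀ e ∈ E, ℓ e ≤ K) :
    mes ℓ E ≤ K * E.ncard := by
  rw [mes, finsum_mem_eq_finite_toFinset_sum _ hE, Set.ncard_eq_toFinset_card _ hE, mul_comm,
    ← nsmul_eq_mul]
  exact Finset.sum_le_card_nsmul _ _ _ fun e he => hK e (hE.mem_toFinset.mp he)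

lemma mval_pos (hlf : ∀ v, (G.neighborSet v).Finite) (hpos : ∀ e ∈ G.edgeSet, 0 < ℓ e)
    {v w : V} (hvw : G.Adj v w) : 0 < mval G ℓ v := by
  have hfin := G.incidenceSet_finite hlf v
  rw [mval, finsum_mem_eq_finite_toFinset_sum _ hfin]
  exact Finset.sum_pos (fun e he => hpos e (G.incidenceSet_subset v (hfin.mem_toFinset.mp he)))
    ⟨s(v, w), hfin.mem_toFinset.mpr (G.mk'_mem_incidenceSet_left_iff.mpr hvw)⟩

lemma cVal_mul_self_le [DecidableEq V] (hm : ∀ w, 0 < mval G ℓ w) {e : Sym2 V}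
    (he : e ∈ G.edgeSet) (hℓ : 0 < ℓ e) (s : Finset V) :
    cVal G ℓ e * ℓ e ≤ 1 - ∑ w ∈ s, if w ∈ e then ℓ e / mval G ℓ w else 0 := by
  induction e with
  | _ x y =>
  have hxy : x ≠ y := G.ne_of_adj he
  have hends : {w : V | w ∈ s(x, y)} = {x, y} := by ext; simp
  have hcVal : cVal G ℓ s(x, y) * ℓ s(x, y)
      = 1 - (ℓ s(x, y) / mval G ℓ x + ℓ s(x, y) / mval G ℓ y) := by
    rw [cVal, hends, finsum_mem_pair hxy]
    field_simp
  have hsub : s.filter (· ∈ s(x, y)) ⊆ {x, y} := fun w hw => by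
    simpa [Sym2.mem_iff] using (Finset.mem_filter.mp hw).2
  calc cVal G ℓ s(x, y) * ℓ s(x, y)
      = 1 - ∑ w ∈ ({x, y} : Finset V), ℓ s(x, y) / mval G ℓ w := by
        rw [hcVal, Finset.sum_pair hxy]
    _ ≤ 1 - ∑ w ∈ s.filter (· ∈ s(x, y)), ℓ s(x, y) / mval G ℓ w := by
        exact sub_le_sub_left (Finset.sum_le_sum_of_subset_of_nonneg hsub fun w _ _ =>
          div_nonneg hℓ.le (hm w).le) 1
    _ = 1 - ∑ w ∈ s, if w ∈ s(x, y) then ℓ s(x, y) / mval G ℓ w else 0 := by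
        rw [Finset.sum_filter]

lemma finsum_cVal_mul_self_le (hlf : ∀ v, (G.neighborSet v).Finite)
    (hpos : ∀ e ∈ G.edgeSet, 0 < ℓ e) (hm : ∀ w, 0 < mval G ℓ w) {C : Set V} (hC : C.Finite) :
    ∑ᶠ e ∈ G.edgesMeeting C, cVal G ℓ e * ℓ e ≤ (G.edgesMeeting C).ncard - C.ncard := by
  classical
  have hM := G.edgesMeeting_finite hlf hC
  set f : Sym2 V → V → ℝ := fun e w => if w ∈ e then ℓ e / mval G ℓ w else 0
  have hvertex : ∀ w ∈ hC.toFinset, ∑ e ∈ hM.toFinset, f e w = 1 := by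
    intro w hw
    have hinc := G.incidenceSet_finite hlf w
    have hfilter : hM.toFinset.filter (w ∈ ·) = hinc.toFinset := by
      ext e
      simp only [Finset.mem_filter, Set.Finite.mem_toFinset, edgesMeeting, incidenceSet,
        Set.mem_ofPred_eq]
      exact ⟨fun ⟨⟨he, _⟩, hwe⟩ => ⟨he, hwe⟩,
        fun ⟨he, hwe⟩ => ⟨⟨he, w, hC.mem_toFinset.mp hw, hwe⟩, hwe⟩⟩
    rw [← Finset.sum_filter, hfilter, ← Finset.sum_div, ← finsum_mem_eq_finite_toFinset_sum,
      ← mval, div_self (hm w).ne']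
  calc ∑ᶠ e ∈ G.edgesMeeting C, cVal G ℓ e * ℓ e
      = ∑ e ∈ hM.toFinset, cVal G ℓ e * ℓ e := finsum_mem_eq_finite_toFinset_sum _ hM
    _ ≤ ∑ e ∈ hM.toFinset, (1 - ∑ w ∈ hC.toFinset, f e w) := by
        refine Finset.sum_le_sum fun e he => ?_
        have heG := (hM.mem_toFinset.mp he).1
        exact cVal_mul_self_le hm heG (hpos e heG) _
    _ = hM.toFinset.card - ∑ w ∈ hC.toFinset, ∑ e ∈ hM.toFinset, f e w := by
        rw [Finset.sum_sub_distrib, Finset.sum_comm, Finset.sum_const, nsmul_one]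
    _ = (G.edgesMeeting C).ncard - C.ncard := by
        rw [Finset.sum_congr rfl hvertex, Finset.sum_const, nsmul_one,
          ← Set.ncard_eq_toFinset_card _ hM, ← Set.ncard_eq_toFinset_card _ hC]

lemma finsum_cVal_mul_self_le_ncard_edgeBoundary (hlf : ∀ v, (G.neighborSet v).Finite)
    (hpos : ∀ e ∈ G.edgeSet, 0 < ℓ e) (hm : ∀ w, 0 < mval G ℓ w) (hacyc : G.IsAcyclic)
    {C : Set V} (hC : C.Finite) (hconn : (G.induce C).Connected) :
    ∑ᶠ e ∈ G.edgesMeeting C, cVal G ℓ e * ℓ e ≤ (G.edgeBoundary C).ncard - 1 := by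
  have hcount := ncard_edgesInside_add_one hacyc hC hconn
  have hsum := finsum_cVal_mul_self_le hlf hpos hm hC
  rw [ncard_edgesMeeting hlf hC, ← hcount] at hsum
  push_cast at hsum
  linarith

lemma mul_mes_le_ncard_edgeBoundary_of_connected [Infinite V]
    (hlf : ∀ v, (G.neighborSet v).Finite) (hpos : ∀ e ∈ G.edgeSet, 0 < ℓ e)
    (hm : ∀ w, 0 < mval G ℓ w) (hconn : G.Connected) (hacyc : G.IsAcyclic) {ε M₀ c : ℝ} (hcε : c ≤ ε) (hcM : c * M₀ ≤ 1) (hc : 0 ≤ c)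
    {C : Set V} (hC : C.Finite) (hne : C.Nonempty) (hCconn : (G.induce C).Connected)
    (hav : M₀ ≤ mes ℓ (G.edgesMeeting C) →
      ε * mes ℓ (G.edgesMeeting C) ≤ ∑ᶠ e ∈ G.edgesMeeting C, cVal G ℓ e * ℓ e) :
    c * mes ℓ (G.edgesMeeting C) ≤ (G.edgeBoundary C).ncard := by
  have hmes : 0 ≤ mes ℓ (G.edgesMeeting C) := mes_nonneg_s14 fun e he => (hpos e he.1).le
  by_cases hlarge : M₀ ≤ mes ℓ (G.edgesMeeting C)
  · calc c * mes ℓ (G.edgesMeeting C)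
        ≤ ε * mes ℓ (G.edgesMeeting C) := mul_le_mul_of_nonneg_right hcε hmes
      _ ≤ ∑ᶠ e ∈ G.edgesMeeting C, cVal G ℓ e * ℓ e := hav hlarge
      _ ≤ (G.edgeBoundary C).ncard - 1 :=
          finsum_cVal_mul_self_le_ncard_edgeBoundary hlf hpos hm hacyc hC hCconn
      _ ≤ (G.edgeBoundary C).ncard := by linarith
  · have hone : 1 ≤ (G.edgeBoundary C).ncard :=
      (Set.ncard_pos (G.edgeBoundary_finite hlf hC)).mpr (edgeBoundary_nonempty hconn hC hne)
    calc c * mes ℓ (G.edgesMeeting C) ≤ c * M₀ := by gcongr; linarith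
      _ ≤ 1 := hcM
      _ ≤ (G.edgeBoundary C).ncard := by exact_mod_cast hone

lemma mul_mes_le_ncard_edgeBoundary {c : ℝ} (hlf : ∀ v, (G.neighborSet v).Finite) {I : Set V}
    (hI : I.Finite) (hcomp : ∀ C ⊆ I, C.Nonempty → (G.induce C).Connected →
      c * mes ℓ (G.edgesMeeting C) ≤ (G.edgeBoundary C).ncard) :
    c * mes ℓ (G.edgesMeeting I) ≤ (G.edgeBoundary I).ncard := by
  induction hn : I.ncard using Nat.strong_induction_on generalizing I with
  | _ n ih =>
  rcases I.eq_empty_or_nonempty with rfl | ⟨x, hx⟩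
  · simp [mes, edgesMeeting]
  obtain ⟨C, hCI, hxC, hC, hclosed⟩ := exists_connected_subset_adj_closed hI hx
  have hdisj : Disjoint (G.edgesMeeting C) (G.edgesMeeting (I \ C)) := by
    refine Set.disjoint_left.mpr ?_
    rintro e ⟨heG, c, hc, hce⟩ ⟨-, y, hy, hye⟩
    have hcy : c ≠ y := fun h => hy.2 (h ▸ hc)
    rw [(Sym2.mem_and_mem_iff hcy).mp ⟨hce, hye⟩] at heG
    exact hy.2 (hclosed c hc y hy.1 heG)
  have hunion : C ∪ I \ C = I := Set.union_sdiff_cancel hCI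
  have hsmaller : (I \ C).ncard < n :=
    hn ▸ Set.ncard_lt_ncard ⟨Set.sdiff_subset, fun h => (h (hCI hxC)).2 hxC⟩ hI
  have hrest := ih _ hsmaller hI.sdiff (fun C' hC' => hcomp C' (hC'.trans Set.sdiff_subset)) rfl
  have hmeet : G.edgesMeeting I = G.edgesMeeting C ∪ G.edgesMeeting (I \ C) := by
    rw [← edgesMeeting_union, hunion]
  have hbdry : Disjoint (G.edgeBoundary C) (G.edgeBoundary (I \ C)) :=
    hdisj.mono Set.sdiff_subset Set.sdiff_subset
  calc c * mes ℓ (G.edgesMeeting I)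
      = c * mes ℓ (G.edgesMeeting C) + c * mes ℓ (G.edgesMeeting (I \ C)) := by
        rw [hmeet, mes_union hdisj (G.edgesMeeting_finite hlf (hI.subset hCI))
          (G.edgesMeeting_finite hlf hI.sdiff), mul_add]
    _ ≤ (G.edgeBoundary C).ncard + (G.edgeBoundary (I \ C)).ncard :=
        add_le_add (hcomp C hCI ⟨x, hxC⟩ hC) hrest
    _ = (G.edgeBoundary C ∪ G.edgeBoundary (I \ C)).ncard := by
        rw [Set.ncard_union_eq hbdry (G.edgeBoundary_finite hlf (hI.subset hCI))
          (G.edgeBoundary_finite hlf hI.sdiff), Nat.cast_add]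
    _ ≤ (G.edgeBoundary I).ncard := by
        exact_mod_cast Set.ncard_le_ncard (hunion ▸ edgeBoundary_union_subset hdisj)
          (G.edgeBoundary_finite hlf hI)

def innerVerts (G : SimpleGraph V) (H : G.Subgraph) : Set V := H.verts \ bdry G H

lemma SimpleGraph.Subgraph.adj_of_mem_innerVerts (hlf : ∀ v, (G.neighborSet v).Finite)
    {H : G.Subgraph} {v w : V} (hv : v ∈ innerVerts G H) (hvw : G.Adj v w) : H.Adj v w := by
  have hnbr : H.neighborSet v = G.neighborSet v :=
    Set.eq_of_subset_of_ncard_le (H.neighborSet_subset v)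
      (not_lt.mp fun h => hv.2 ⟨hv.1, h⟩) (hlf v)
  exact (hnbr ▸ hvw : w ∈ H.neighborSet v)

lemma ncard_edgeSet_meeting_bdry_le_degBdry (hlf : ∀ v, (G.neighborSet v).Finite)
    {H : G.Subgraph} (hH : H.verts.Finite) :
    ({e ∈ H.edgeSet | ∃ b ∈ bdry G H, b ∈ e}.ncard : ℝ) ≤ degBdry G H := by
  have hB : (bdry G H).Finite := hH.subset fun _ hv => hv.1
  have hnbr : ∀ b, (H.neighborSet b).Finite := fun b => (hlf b).subset (H.neighborSet_subset b)
  have hcover : {e ∈ H.edgeSet | ∃ b ∈ bdry G H, b ∈ e}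
      ⊆ ⋃ b ∈ hB.toFinset, (fun w => s(b, w)) '' H.neighborSet b := by
    rintro e ⟨he, b, hb, hbe⟩
    refine Set.mem_biUnion (hB.mem_toFinset.mpr hb) ⟨Sym2.Mem.other hbe, ?_, Sym2.other_spec hbe⟩
    rw [← Sym2.other_spec hbe] at he
    exact he
  rw [degBdry, finsum_mem_eq_finite_toFinset_sum _ hB]
  exact_mod_cast calc {e ∈ H.edgeSet | ∃ b ∈ bdry G H, b ∈ e}.ncard
      ≤ (⋃ b ∈ hB.toFinset, (fun w => s(b, w)) '' H.neighborSet b).ncard :=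
        Set.ncard_le_ncard hcover (hB.toFinset.finite_toSet.biUnion fun b _ => (hnbr b).image _)
    _ ≤ ∑ b ∈ hB.toFinset, ((fun w => s(b, w)) '' H.neighborSet b).ncard :=
        Finset.set_ncard_biUnion_le _ _
    _ ≤ ∑ b ∈ hB.toFinset, (H.neighborSet b).ncard :=
        Finset.sum_le_sum fun b _ => Set.ncard_image_le (hnbr b)

lemma ncard_edgeBoundary_add_ncard_le_degBdry (hlf : ∀ v, (G.neighborSet v).Finite)
    {H : G.Subgraph} (hH : H.verts.Finite) :
    ((G.edgeBoundary (innerVerts G H)).ncard : ℝ)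
      + (H.edgeSet \ G.edgesMeeting (innerVerts G H)).ncard ≤ degBdry G H := by
  set I := innerVerts G H
  have hEfin := (G.edgesMeeting_finite hlf hH).subset H.edgeSet_subset_edgesMeeting_verts
  have hsub : G.edgeBoundary I ∪ (H.edgeSet \ G.edgesMeeting I)
      ⊆ {e ∈ H.edgeSet | ∃ b ∈ bdry G H, b ∈ e} := by
    rintro e (he | ⟨heH, heI⟩)
    · obtain ⟨heG, ⟨u, hu, hue⟩, w, hwe, hwI⟩ := mem_edgeBoundary.mp he
      obtain rfl := (Sym2.mem_and_mem_iff fun h : u = w => hwI (h ▸ hu)).mp ⟨hue, hwe⟩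
      have huw := Subgraph.adj_of_mem_innerVerts hlf hu heG
      exact ⟨huw, w, by_contra fun hw => hwI ⟨huw.snd_mem, hw⟩, Sym2.mem_mk_right u w⟩
    · induction e with
      | _ x y =>
      refine ⟨heH, x, by_contra fun hx => heI ?_, Sym2.mem_mk_left x y⟩
      exact ⟨H.edgeSet_subset heH, x, ⟨heH.fst_mem, hx⟩, Sym2.mem_mk_left x y⟩
  have hdisj : Disjoint (G.edgeBoundary I) (H.edgeSet \ G.edgesMeeting I) :=
    Set.disjoint_sdiff_right.mono_left Set.sdiff_subset
  calc ((G.edgeBoundary I).ncard : ℝ) + (H.edgeSet \ G.edgesMeeting I).ncard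
      = (G.edgeBoundary I ∪ (H.edgeSet \ G.edgesMeeting I)).ncard := by
        rw [Set.ncard_union_eq hdisj (G.edgeBoundary_finite hlf (hH.subset Set.sdiff_subset))
          hEfin.sdiff, Nat.cast_add]
    _ ≤ {e ∈ H.edgeSet | ∃ b ∈ bdry G H, b ∈ e}.ncard := by
        exact_mod_cast Set.ncard_le_ncard hsub (hEfin.subset fun _ he => he.1)
    _ ≤ degBdry G H := ncard_edgeSet_meeting_bdry_le_degBdry hlf hH

lemma mes_le_mul_degBdry (hlf : ∀ v, (G.neighborSet v).Finite) {K : ℝ}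
    (hK : ∀ e ∈ G.edgeSet, ℓ e ≤ K) (hK₀ : 0 ≤ K) {c : ℝ} (hc : 0 < c)
    (hiso : ∀ I : Set V, I.Finite → c * mes ℓ (G.edgesMeeting I) ≤ (G.edgeBoundary I).ncard)
    {H : G.Subgraph} (hH : H.verts.Finite) :
    mes ℓ H.edgeSet ≤ (c⁻¹ + K) * degBdry G H := by
  set I := innerVerts G H
  have hIH : G.edgesMeeting I ⊆ H.edgeSet := by
    rintro e ⟨heG, u, hu, hue⟩
    rw [← Sym2.other_spec hue] at heG ⊢
    exact Subgraph.adj_of_mem_innerVerts hlf hu heG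
  have hEfin := (G.edgesMeeting_finite hlf hH).subset H.edgeSet_subset_edgesMeeting_verts
  have hinner : mes ℓ (G.edgesMeeting I) ≤ c⁻¹ * (G.edgeBoundary I).ncard :=
    (le_inv_mul_iff₀ hc).mpr (hiso I (hH.subset Set.sdiff_subset))
  have houter : mes ℓ (H.edgeSet \ G.edgesMeeting I) ≤ K * (H.edgeSet \ G.edgesMeeting I).ncard :=
    mes_le_mul_ncard hEfin.sdiff fun e he => hK e (H.edgeSet_subset he.1)
  have hcount := ncard_edgeBoundary_add_ncard_le_degBdry hlf hH
  have hc' : 0 ≤ c⁻¹ := (inv_pos.mpr hc).le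
  calc mes ℓ H.edgeSet = mes ℓ (G.edgesMeeting I) + mes ℓ (H.edgeSet \ G.edgesMeeting I) := by
        rw [← mes_union Set.disjoint_sdiff_right (hEfin.subset hIH) hEfin.sdiff,
          Set.union_sdiff_cancel hIH]
    _ ≤ (c⁻¹ + K) * (((G.edgeBoundary I).ncard : ℝ) + (H.edgeSet \ G.edgesMeeting I).ncard) := by
        nlinarith [(G.edgeBoundary I).ncard.cast_nonneg (α := ℝ),
          (H.edgeSet \ G.edgesMeeting I).ncard.cast_nonneg (α := ℝ)]
    _ ≤ (c⁻¹ + K) * degBdry G H := by gcongr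

lemma inv_le_alpha (hlf : ∀ v, (G.neighborSet v).Finite) (hpos : ∀ e ∈ G.edgeSet, 0 < ℓ e)
    {v w : V} (hvw : G.Adj v w) {D : ℝ} (hD : 0 < D)
    (hbound : ∀ H : G.Subgraph, H.verts.Finite → mes ℓ H.edgeSet ≤ D * degBdry G H) :
    D⁻¹ ≤ alpha G ℓ := by
  refine le_csInf ⟨_, G.subgraphOfAdj hvw, by simp, Subgraph.subgraphOfAdj_connected hvw,
    ⟨s(v, w), by simp⟩, rfl⟩ ?_
  rintro _ ⟨H, hH, -, hne, rfl⟩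
  have hmes := mes_pos_s14 (fun e he => hpos e (H.edgeSet_subset he))
    ((G.edgesMeeting_finite hlf hH).subset H.edgeSet_subset_edgesMeeting_verts) hne
  rw [le_div_iff₀ hmes, inv_mul_le_iff₀ hD]
  exact hbound H hH

end

theorem statement_14_general {V : Type*} [Infinite V] (G : SimpleGraph V)
    (hconn : G.Connected) (hacyc : G.IsAcyclic)
    (hlf : ∀ v : V, (G.neighborSet v).Finite)
    (ℓ : Sym2 V → ℝ) (hpos : ∀ e ∈ G.edgeSet, 0 < ℓ e)
    (hbdd : BddAbove (ℓ '' G.edgeSet))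
    (ε M₀ : ℝ) (hε : 0 < ε) (hM₀ : 0 < M₀)
    (hav : ∀ U : Set V, U.Finite → U.Nonempty → (G.induce U).Connected →
      M₀ ≤ mes ℓ (starSubgraph G U).edgeSet →
      ε * mes ℓ (starSubgraph G U).edgeSet
        ≤ ∑ᶠ e ∈ (starSubgraph G U).edgeSet, cVal G ℓ e * ℓ e) :
    0 < alpha G ℓ := by
  obtain ⟨K, hK⟩ := hbdd
  have hnbr : ∀ v, ∃ w, G.Adj v w := hconn.preconnected.exists_adj_of_nontrivial
  have hm : ∀ w, 0 < mval G ℓ w := fun w => mval_pos hlf hpos (hnbr w).choose_spec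
  set c := min ε M₀⁻¹
  have hc : 0 < c := lt_min hε (inv_pos.mpr hM₀)
  have hcM : c * M₀ ≤ 1 :=
    (mul_le_mul_of_nonneg_right (min_le_right _ _) hM₀.le).trans_eq (inv_mul_cancel₀ hM₀.ne')
  have hiso : ∀ I : Set V, I.Finite →
      c * mes ℓ (G.edgesMeeting I) ≤ (G.edgeBoundary I).ncard := fun I hI =>
    mul_mes_le_ncard_edgeBoundary hlf hI fun C hCI hne hC =>
      mul_mes_le_ncard_edgeBoundary_of_connected hlf hpos hm hconn hacyc (min_le_left _ _) hcM
        hc.le (hI.subset hCI) hne hC (starSubgraph_edgeSet C ▸ hav C (hI.subset hCI) hne hC)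
  have hD : 0 < c⁻¹ + max K 0 := by positivity
  have hvw := (hnbr (Classical.arbitrary V)).choose_spec
  exact (inv_pos.mpr hD).trans_le <| inv_le_alpha hlf hpos hvw hD fun H hH =>
    mes_le_mul_degBdry hlf (fun e he => (hK ⟨e, he, rfl⟩).trans (le_max_left K 0))
      (le_max_right K 0) hc hiso hH

/-- Theorem 3.1 for trees: if the averaged characteristic value over all
large star-like subgraphs is bounded below by `ε > 0`, then `α(G) > 0`. -/
theorem statement_14 {V : Type*} [Infinite V] (G : SimpleGraph V)
    (hconn : G.Connected) (hacyc : G.IsAcyclic)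
    (hlf : ∀ v : V, (G.neighborSet v).Finite)
    (hdeg : ∀ v : V, 2 ≤ (G.neighborSet v).ncard)
    (ℓ : Sym2 V → ℝ) (hpos : ∀ e ∈ G.edgeSet, 0 < ℓ e)
    (hbdd : BddAbove (ℓ '' G.edgeSet))
    (ε M₀ : ℝ) (hε : 0 < ε) (hM₀ : 0 < M₀)
    (hav : ∀ U : Set V, U.Finite → U.Nonempty → (G.induce U).Connected →
      M₀ ≤ mes ℓ (starSubgraph G U).edgeSet →
      ε * mes ℓ (starSubgraph G U).edgeSet
        ≤ ∑ᶠ e ∈ (starSubgraph G U).edgeSet, cVal G ℓ e * ℓ e) :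
    0 < alpha G ℓ :=
  statement_14_general G hconn hacyc hlf ℓ hpos hbdd ε M₀ hε hM₀ hav
end
end
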